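/- arXiv:2505.20627 — 2 statements merged into one kernel-verified Lean document; each statement's English description precedes it below -/
import Mathlib

section
/- Let M₋ < Ψ(1/2) < M₊ and define Ψ(t) = M₋ for t < 1/2, Ψ(1/2) at t = 1/2, and M₊ for t > 1/2. Let S₁ be the Smith set (every element of S₁ beats every element outside S₁). Then for any Nash equilibrium (π₁*, π₂*), the support of π₁* is contained in S₁. -/
open Finset

/-- A probability vector on `Fin n`. -/
def IsProb {n : ℕ} (π : Fin n → ℝ) : Prop := (∀ i, 0 ≤ π i) ∧ ∑ i, π i = 1

/-- Expected payoff of the two-player game with payoff matrix `A`. -/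
def payoff {n : ℕ} (A : Fin n → Fin n → ℝ) (π π' : Fin n → ℝ) : ℝ :=
  ∑ i, ∑ j, π i * π' j * A i j

/-- Nash equilibrium of the zero-sum game with payoff matrix `A`. -/
def IsNash {n : ℕ} (A : Fin n → Fin n → ℝ) (π₁ π₂ : Fin n → ℝ) : Prop :=
  IsProb π₁ ∧ IsProb π₂ ∧
  (∀ π, IsProb π → payoff A π π₂ ≤ payoff A π₁ π₂) ∧
  (∀ π', IsProb π' → payoff A π₁ π₂ ≤ payoff A π₁ π')

/-!
Suppose `k ∉ S₁` carries mass under `π₁`, and let `A` be the payoff matrix. For any `i ∈ S₁`,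
row `k` is weakly dominated by row `i`, strictly in column `i` (`A k i = M₋ < Ψ(1/2) = A i i`).
Since `k` is a best response, `π₂` puts no mass on `S₁`, so every row of `S₁` earns `M₊` and the
value is at least `M₊`. But player 2 answering with a pure `i₀ ∈ S₁` pays at most
`M₊ - π₁ k (M₊ - M₋) < M₊`.
-/

lemma IsProb.sum_mul_lt {n : ℕ} {w f : Fin n → ℝ} {M : ℝ} {k : Fin n} (hw : IsProb w)
    (hf : ∀ i, f i ≤ M) (hk : 0 < w k) (hfk : f k < M) : ∑ i, w i * f i < M :=
  calc ∑ i, w i * f i < ∑ i, w i * M :=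
        sum_lt_sum (fun i _ => mul_le_mul_of_nonneg_left (hf i) (hw.1 i))
          ⟨k, mem_univ k, mul_lt_mul_of_pos_left hfk hk⟩
    _ = M := by rw [← sum_mul, hw.2, one_mul]

lemma IsProb.eq_of_sum_mul_eq {n : ℕ} {w f : Fin n → ℝ} {v : ℝ} {k : Fin n} (hw : IsProb w)
    (hf : ∀ i, f i ≤ v) (hsum : ∑ i, w i * f i = v) (hk : 0 < w k) : f k = v :=
  (hf k).eq_of_not_lt fun hfk => (hw.sum_mul_lt hf hk hfk).ne hsum

lemma isProb_single {n : ℕ} (i : Fin n) : IsProb (Pi.single i 1 : Fin n → ℝ) :=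
  ⟨fun j => by by_cases h : j = i <;> simp [h], by simp⟩

section payoff

variable {n : ℕ} (A : Fin n → Fin n → ℝ)

lemma payoff_single_left (i : Fin n) (π' : Fin n → ℝ) :
    payoff A (Pi.single i 1) π' = ∑ j, π' j * A i j := by
  simp [payoff, Pi.single_apply]

lemma payoff_single_right (π : Fin n → ℝ) (j : Fin n) :
    payoff A π (Pi.single j 1) = ∑ i, π i * A i j := by
  simp [payoff, Pi.single_apply]

lemma payoff_eq_sum_mul_payoff_single_left (π π' : Fin n → ℝ) :
    payoff A π π' = ∑ i, π i * payoff A (Pi.single i 1) π' := by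
  simp only [payoff_single_left]
  simp only [payoff, mul_sum, mul_assoc]

end payoff

namespace IsNash

variable {n : ℕ} {A : Fin n → Fin n → ℝ} {π₁ π₂ : Fin n → ℝ}

lemma payoff_single_left_le (h : IsNash A π₁ π₂) (i : Fin n) :
    payoff A (Pi.single i 1) π₂ ≤ payoff A π₁ π₂ :=
  h.2.2.1 _ (isProb_single i)

lemma le_payoff_single_right (h : IsNash A π₁ π₂) (j : Fin n) :
    payoff A π₁ π₂ ≤ payoff A π₁ (Pi.single j 1) :=
  h.2.2.2 _ (isProb_single j)

lemma payoff_single_left_eq_of_pos (h : IsNash A π₁ π₂) {k : Fin n} (hk : 0 < π₁ k) :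
    payoff A (Pi.single k 1) π₂ = payoff A π₁ π₂ :=
  h.1.eq_of_sum_mul_eq h.payoff_single_left_le
    (payoff_eq_sum_mul_payoff_single_left A π₁ π₂).symm hk

lemma eq_zero_of_dominated (h : IsNash A π₁ π₂) {i j k : Fin n} (hk : 0 < π₁ k)
    (hdom : ∀ l, A k l ≤ A i l) (hj : A k j < A i j) : π₂ j = 0 := by
  have hgain : ∀ l ∈ univ, 0 ≤ π₂ l * (A i l - A k l) :=
    fun l _ => mul_nonneg (h.2.1.1 l) (sub_nonneg.2 (hdom l))
  have hsum : ∑ l, π₂ l * (A i l - A k l) = 0 := by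
    refine le_antisymm ?_ (sum_nonneg hgain)
    have hdiff : ∑ l, π₂ l * (A i l - A k l) =
        payoff A (Pi.single i 1) π₂ - payoff A (Pi.single k 1) π₂ := by
      simp only [payoff_single_left, mul_sub, sum_sub_distrib]
    rw [hdiff, h.payoff_single_left_eq_of_pos hk, sub_nonpos]
    exact h.payoff_single_left_le i
  have hj0 := (sum_eq_zero_iff_of_nonneg hgain).1 hsum j (mem_univ j)
  exact (mul_eq_zero.1 hj0).resolve_right (sub_ne_zero.2 hj.ne')

theorem mem_of_pos_of_dominant_set (h : IsNash A π₁ π₂) {S : Finset (Fin n)} {Mlo Mhi : ℝ}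
    (hS : S.Nonempty) (hlo : ∀ i j, Mlo ≤ A i j) (hhi : ∀ i j, A i j ≤ Mhi)
    (hwin : ∀ i ∈ S, ∀ j ∉ S, A i j = Mhi) (hlose : ∀ i ∉ S, ∀ j ∈ S, A i j = Mlo)
    (hdiag : ∀ i ∈ S, Mlo < A i i) {k : Fin n} (hk : 0 < π₁ k) : k ∈ S := by
  by_contra hkS
  obtain ⟨i₀, hi₀⟩ := hS
  have hπ₂ : ∀ j ∈ S, π₂ j = 0 := by
    intro j hj
    refine h.eq_zero_of_dominated (i := j) hk (fun l => ?_)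
      (by rw [hlose k hkS j hj]; exact hdiag j hj)
    by_cases hl : l ∈ S
    · rw [hlose k hkS l hl]; exact hlo j l
    · rw [hwin j hj l hl]; exact hhi k l
  have hrow : payoff A (Pi.single i₀ 1) π₂ = Mhi := by
    rw [payoff_single_left]
    calc ∑ j, π₂ j * A i₀ j = ∑ j, π₂ j * Mhi := by
          refine sum_congr rfl fun j _ => ?_
          by_cases hj : j ∈ S
          · simp [hπ₂ j hj]
          · rw [hwin i₀ hi₀ j hj]
      _ = Mhi := by rw [← sum_mul, h.2.1.2, one_mul]
  have hcol : payoff A π₁ (Pi.single i₀ 1) < Mhi := by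
    rw [payoff_single_right]
    refine h.1.sum_mul_lt (fun i => hhi i i₀) hk ?_
    rw [hlose k hkS i₀ hi₀]
    exact (hdiag i₀ hi₀).trans_le (hhi i₀ i₀)
  linarith [h.payoff_single_left_le i₀, h.le_payoff_single_right i₀]

end IsNash

theorem stmt_9_general {n : ℕ} (P : Fin n → Fin n → ℝ) (Mlo Mhi c : ℝ)
    (hM : Mlo < c) (hM' : c < Mhi)
    (hPanti : ∀ i j, P i j + P j i = 1)
    (S₁ : Finset (Fin n)) (hS₁ne : S₁.Nonempty)
    (hSmith : ∀ i ∈ S₁, ∀ j ∉ S₁, 1 / 2 < P i j)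
    (π₁ π₂ : Fin n → ℝ)
    (hNash : IsNash
      (fun i j => if P i j < 1 / 2 then Mlo else if P i j = 1 / 2 then c else Mhi) π₁ π₂) :
    ∀ i, 0 < π₁ i → i ∈ S₁ := by
  have hdiag : ∀ i, P i i = 1 / 2 := fun i => by linarith [hPanti i i]
  refine fun k hk => hNash.mem_of_pos_of_dominant_set (Mlo := Mlo) (Mhi := Mhi) hS₁ne
    (fun i j => ?_) (fun i j => ?_) (fun i hi j hj => ?_) (fun i hi j hj => ?_) (fun i _ => ?_) hk
  · split_ifs <;> linarith
  · split_ifs <;> linarith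
  · have := hSmith i hi j hj
    rw [if_neg (by linarith), if_neg (by linarith)]
  · have := hSmith j hj i hi
    rw [if_pos (by linarith [hPanti i j])]
  · simpa [hdiag i] using hM

theorem stmt_9 {n : ℕ} (P : Fin n → Fin n → ℝ) (Mlo Mhi c : ℝ)
    (hM : Mlo < c) (hM' : c < Mhi)
    (hP01 : ∀ i j, 0 ≤ P i j ∧ P i j ≤ 1)
    (hPanti : ∀ i j, P i j + P j i = 1)
    (hNoTie : ∀ i j, i ≠ j → P i j ≠ 1 / 2)
    (S₁ : Finset (Fin n)) (hS₁ne : S₁.Nonempty)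
    (hSmith : ∀ i ∈ S₁, ∀ j ∉ S₁, 1 / 2 < P i j)
    (π₁ π₂ : Fin n → ℝ)
    (hNash : IsNash
      (fun i j => if P i j < 1 / 2 then Mlo else if P i j = 1 / 2 then c else Mhi) π₁ π₂) :
    ∀ i, 0 < π₁ i → i ∈ S₁ :=
  stmt_9_general P Mlo Mhi c hM hM' hPanti S₁ hS₁ne hSmith π₁ π₂ hNash
end

section
/- For any probability vector π* on [n] with π* > 0, the payoff matrix α_{ij} = −π*_j/π*_i + n·δ_{ij} satisfies the KKT conditions certifying that π* is a maximin strategy, with t* = 0 and u*_j = (π*_j)^{-1} / Σ_k (π*_k)^{-1}. In particular π* is a Nash solution of this game. -/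
/-! Column `j` of the matrix weighted by `π*` is `-n π*_j + n π*_j = 0`, and row `i` weighted by
`1 / π*` is `-n / π*_i + n / π*_i = 0`. So `π*` guarantees payoff `0` against every strategy,
while the normalised `1 / π*` holds every strategy of the first player to `0`; by weak duality
`0` is the value of the game and `π*` is maximin. -/

open Finset

/-- The worst-case payoff for the first player playing `π`. -/
noncomputable def worstCase {n : ℕ} (A : Fin n → Fin n → ℝ) (π : Fin n → ℝ) : ℝ :=
  sInf ((fun π' => payoff A π π') '' {π' | IsProb π'})

/-- `π` is an optimal maximin strategy for the first player. -/
def IsMaximin {n : ℕ} (A : Fin n → Fin n → ℝ) (π : Fin n → ℝ) : Prop :=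
  IsProb π ∧ ∀ π', IsProb π' → worstCase A π' ≤ worstCase A π

section ZeroSumGame

variable {n : ℕ} {A : Fin n → Fin n → ℝ} {π π' : Fin n → ℝ} {t : ℝ}

theorem setOf_isProb_eq_stdSimplex : {π : Fin n → ℝ | IsProb π} = stdSimplex ℝ (Fin n) := rfl

theorem IsProb.le_sum_mul {f : Fin n → ℝ} (hπ : IsProb π) (hf : ∀ i, t ≤ f i) :
    t ≤ ∑ i, π i * f i :=
  calc t = ∑ i, π i * t := by rw [← sum_mul, hπ.2, one_mul]
    _ ≤ ∑ i, π i * f i := sum_le_sum fun i _ => mul_le_mul_of_nonneg_left (hf i) (hπ.1 i)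

theorem IsProb.sum_mul_le {f : Fin n → ℝ} (hπ : IsProb π) (hf : ∀ i, f i ≤ t) :
    ∑ i, π i * f i ≤ t :=
  calc ∑ i, π i * f i ≤ ∑ i, π i * t :=
        sum_le_sum fun i _ => mul_le_mul_of_nonneg_left (hf i) (hπ.1 i)
    _ = t := by rw [← sum_mul, hπ.2, one_mul]

theorem payoff_eq_sum_mul_colSum (A : Fin n → Fin n → ℝ) (π π' : Fin n → ℝ) :
    payoff A π π' = ∑ j, π' j * ∑ i, π i * A i j := by
  simp only [payoff, mul_sum]
  rw [sum_comm]
  exact sum_congr rfl fun j _ => sum_congr rfl fun i _ => by ring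

theorem payoff_eq_sum_mul_rowSum (A : Fin n → Fin n → ℝ) (π π' : Fin n → ℝ) :
    payoff A π π' = ∑ i, π i * ∑ j, A i j * π' j := by
  simp only [payoff, mul_sum]
  exact sum_congr rfl fun i _ => sum_congr rfl fun j _ => by ring

theorem bddBelow_payoff_image (A : Fin n → Fin n → ℝ) (π : Fin n → ℝ) :
    BddBelow ((fun π' => payoff A π π') '' {π' | IsProb π'}) := by
  rw [setOf_isProb_eq_stdSimplex]
  exact (isCompact_stdSimplex ℝ (Fin n)).bddBelow_image
    (by unfold payoff; fun_prop : Continuous fun π' => payoff A π π').continuousOn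

theorem worstCase_le_payoff (hπ' : IsProb π') : worstCase A π ≤ payoff A π π' :=
  csInf_le (bddBelow_payoff_image A π) ⟨π', hπ', rfl⟩

theorem le_worstCase (hπ' : IsProb π') (h : ∀ π', IsProb π' → t ≤ payoff A π π') :
    t ≤ worstCase A π :=
  le_csInf ⟨_, π', hπ', rfl⟩ (by rintro _ ⟨π', hπ', rfl⟩; exact h π' hπ')

theorem isMaximin_of_colSum_of_rowSum {u : Fin n → ℝ} (hπ : IsProb π) (hu : IsProb u)
    (hcol : ∀ j, t ≤ ∑ i, π i * A i j) (hrow : ∀ i, ∑ j, A i j * u j ≤ t) :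
    IsMaximin A π := by
  refine ⟨hπ, fun π' hπ' => ?_⟩
  calc worstCase A π' ≤ payoff A π' u := worstCase_le_payoff hu
    _ ≤ t := by rw [payoff_eq_sum_mul_rowSum]; exact hπ'.sum_mul_le hrow
    _ ≤ worstCase A π := le_worstCase hu fun π' hπ' => by
        rw [payoff_eq_sum_mul_colSum]; exact hπ'.le_sum_mul hcol

end ZeroSumGame

section RatioGame

variable {n : ℕ} {p : Fin n → ℝ}

noncomputable def ratioPayoffMatrix (p : Fin n → ℝ) (i j : Fin n) : ℝ :=
  -(p j / p i) + n * if i = j then 1 else 0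

noncomputable def normalizedInv (p : Fin n → ℝ) (j : Fin n) : ℝ :=
  (p j)⁻¹ / ∑ k, (p k)⁻¹

theorem colSum_ratioPayoffMatrix (hp : ∀ i, p i ≠ 0) (j : Fin n) :
    ∑ i, p i * ratioPayoffMatrix p i j = 0 := by
  have hterm : ∀ i, p i * ratioPayoffMatrix p i j = -p j + n * if i = j then p j else 0 := by
    intro i
    rcases eq_or_ne i j with rfl | hij
    · rw [ratioPayoffMatrix, if_pos rfl, if_pos rfl, div_self (hp i)]; ring
    · simp [ratioPayoffMatrix, hij, mul_div_cancel₀ _ (hp i)]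
  simp [hterm, sum_add_distrib]

theorem rowSum_ratioPayoffMatrix_mul_inv (hp : ∀ i, p i ≠ 0) (i : Fin n) :
    ∑ j, ratioPayoffMatrix p i j * (p j)⁻¹ = 0 := by
  have hterm : ∀ j, ratioPayoffMatrix p i j * (p j)⁻¹ =
      -(p i)⁻¹ + n * if i = j then (p i)⁻¹ else 0 := by
    intro j
    rcases eq_or_ne i j with rfl | hij
    · rw [ratioPayoffMatrix, if_pos rfl, if_pos rfl, div_self (hp i)]; ring
    · simp only [ratioPayoffMatrix, if_neg hij, mul_zero, add_zero]
      rw [neg_mul, div_mul_eq_mul_div, mul_inv_cancel₀ (hp j), one_div]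
  simp [hterm, sum_add_distrib]

theorem rowSum_ratioPayoffMatrix_mul_normalizedInv (hp : ∀ i, p i ≠ 0) (i : Fin n) :
    ∑ j, ratioPayoffMatrix p i j * normalizedInv p j = 0 := by
  simp only [normalizedInv, ← mul_div_assoc, ← sum_div, rowSum_ratioPayoffMatrix_mul_inv hp,
    zero_div]

theorem isProb_normalizedInv [NeZero n] (hp : ∀ i, 0 < p i) : IsProb (normalizedInv p) := by
  have hS : 0 < ∑ k, (p k)⁻¹ := sum_pos (fun k _ => inv_pos.mpr (hp k)) univ_nonempty
  refine ⟨fun j => div_nonneg (inv_pos.mpr (hp j)).le hS.le, ?_⟩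
  simp only [normalizedInv, ← sum_div, div_self hS.ne']

end RatioGame

theorem stmt_14 {n : ℕ} (πs : Fin n → ℝ) (hpos : ∀ i, 0 < πs i) (hsum : ∑ i, πs i = 1) :
    (∀ j, ∑ i, πs i * (-(πs j / πs i) + n * if i = j then 1 else 0) ≤ 0) ∧
    (∀ j, ((πs j)⁻¹ / ∑ k, (πs k)⁻¹) *
        ((∑ i, πs i * (-(πs j / πs i) + n * if i = j then 1 else 0)) - 0) = 0) ∧
    (∀ i, ∑ j, (-(πs j / πs i) + n * if i = j then 1 else 0) *
        ((πs j)⁻¹ / ∑ k, (πs k)⁻¹) = 0) ∧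
    IsMaximin (fun i j => -(πs j / πs i) + n * if i = j then 1 else 0) πs := by
  have hne : ∀ i, πs i ≠ 0 := fun i => (hpos i).ne'
  have : NeZero n := ⟨by rintro rfl; simp at hsum⟩
  have hcol := colSum_ratioPayoffMatrix hne
  have hrow := rowSum_ratioPayoffMatrix_mul_normalizedInv hne
  refine ⟨fun j => (hcol j).le, fun j => ?_, hrow, ?_⟩
  · rw [sub_zero]; exact mul_eq_zero_of_right _ (hcol j)
  · exact isMaximin_of_colSum_of_rowSum ⟨fun i => (hpos i).le, hsum⟩
      (isProb_normalizedInv hpos) (fun j => (hcol j).ge) (fun i => (hrow i).le)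
end
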